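/- arXiv:2204.08313 — 6 statements merged into one kernel-verified Lean document; each statement's English description precedes it below -/
import Mathlib

section
/- Let $1 \le q < s$ and $1 \le s < r$. Then the space of anisotropic $(s,q,r)$-summable sequences in any nonzero Banach space $X$ is the zero space: a sequence $(x_j)$ in $X$ satisfies $\sum_j (\sum_k |x_k^*(x_j)|^s)^{q/s} < \infty$ for all $(x_k^*) \in \ell_r(X^*)$ only if all $x_j = 0$. -/
open scoped BigOperators NNReal ENNReal

noncomputable section

/-- `(xs k)` belongs to `ℓ_r(X*)`. -/
def MemLr (r : ℝ) {X : Type*} [NormedAddCommGroup X] [NormedSpace ℝ X]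
    (xs : ℕ → X →L[ℝ] ℝ) : Prop :=
  Summable fun k => ‖xs k‖ ^ r

/-- The `ℓ_r(X*)` norm. -/
noncomputable def lrNorm (r : ℝ) {X : Type*} [NormedAddCommGroup X] [NormedSpace ℝ X]
    (xs : ℕ → X →L[ℝ] ℝ) : ℝ :=
  (∑' k, ‖xs k‖ ^ r) ^ (1 / r)

/-- Weakly `q`-summable sequences. -/
def WeaklySummable (q : ℝ) {X : Type*} [NormedAddCommGroup X] [NormedSpace ℝ X]
    (x : ℕ → X) : Prop :=
  ∀ f : X →L[ℝ] ℝ, Summable fun j => |f (x j)| ^ q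

/-- The weak `ℓ_q` norm. -/
noncomputable def weakNorm (q : ℝ) {X : Type*} [NormedAddCommGroup X] [NormedSpace ℝ X]
    (x : ℕ → X) : ℝ :=
  ⨆ f : {f : X →L[ℝ] ℝ // ‖f‖ ≤ 1}, (∑' j, |f.1 (x j)| ^ q) ^ (1 / q)

/-- Anisotropic `(s,q,r)`-summable sequences. -/
def AnisoSummable (s q r : ℝ) {X : Type*} [NormedAddCommGroup X] [NormedSpace ℝ X]
    (x : ℕ → X) : Prop :=
  ∀ xs : ℕ → X →L[ℝ] ℝ, MemLr r xs →
    (∀ j, Summable fun k => |xs k (x j)| ^ s) ∧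
      Summable fun j => (∑' k, |xs k (x j)| ^ s) ^ (q / s)

/-- The anisotropic `(s,q,r)` norm. -/
noncomputable def anisoNorm (s q r : ℝ) {X : Type*} [NormedAddCommGroup X] [NormedSpace ℝ X]
    (x : ℕ → X) : ℝ :=
  ⨆ xs : {xs : ℕ → X →L[ℝ] ℝ // MemLr r xs ∧ lrNorm r xs ≤ 1},
    (∑' j, (∑' k, |xs.1 k (x j)| ^ s) ^ (q / s)) ^ (1 / q)

set_option synthInstance.maxHeartbeats 400000 in
theorem stmt2 {X : Type*} [NormedAddCommGroup X] [NormedSpace ℝ X] [CompleteSpace X]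
    [Nontrivial X] {s q r : ℝ} (hq : 1 ≤ q) (hqs : q < s) (hr : 1 ≤ r) (hsr : s < r)
    (x : ℕ → X) (hx : AnisoSummable s q r x) :
    ∀ j, x j = 0 := by
  intro j
  by_contra hxj
  have hs0 : (0:ℝ) < s := lt_of_le_of_lt (le_trans zero_le_one hq) hqs
  obtain ⟨f, hf1, hfx⟩ := exists_dual_vector ℝ (x j) (norm_ne_zero_iff.mpr hxj)
  have hfx' : f (x j) = ‖x j‖ := hfx
  set a : ℕ → ℝ := fun k => ((k : ℝ) + 1) ^ (-(1/s)) with ha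
  have hapos : ∀ k, 0 < a k := fun k => Real.rpow_pos_of_pos (by positivity) _
  have hmem : MemLr r (fun k => a k • f) := by
    unfold MemLr
    have heq : ∀ k, ‖a k • f‖ ^ r = ((k : ℝ) + 1) ^ (-(r/s)) := by
      intro k
      have hns : ‖a k • f‖ = |a k| * ‖f‖ :=
        (norm_smul (a k) f).trans (by rw [Real.norm_eq_abs])
      rw [hns, hf1, mul_one, abs_of_pos (hapos k), ha]
      rw [← Real.rpow_mul (by positivity)]
      congr 1
      field_simp
    rw [funext heq]
    have h1 : Summable (fun n : ℕ => ((n:ℝ)) ^ (-(r/s))) := by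
      apply Real.summable_nat_rpow.mpr
      rw [neg_lt_neg_iff]
      rw [lt_div_iff₀ hs0]
      linarith
    have h2 := (summable_nat_add_iff 1).mpr h1
    apply h2.congr
    intro n
    push_cast
    ring_nf
  obtain ⟨hsum, -⟩ := hx (fun k => a k • f) hmem
  have hsj := hsum j
  have heq2 : ∀ k, |(a k • f) (x j)| ^ s = (((k:ℝ)+1))⁻¹ * ‖x j‖ ^ s := by
    intro k
    have h3 : (a k • f) (x j) = a k * f (x j) := rfl
    rw [h3, hfx', abs_mul, abs_of_pos (hapos k), abs_of_nonneg (norm_nonneg _),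
      Real.mul_rpow (le_of_lt (hapos k)) (norm_nonneg _), ha]
    congr 1
    rw [← Real.rpow_mul (by positivity)]
    rw [neg_mul, one_div, inv_mul_cancel₀ (ne_of_gt hs0), Real.rpow_neg_one]
  rw [funext heq2] at hsj
  have hne : ‖x j‖ ^ s ≠ 0 := by
    have : ‖x j‖ ≠ 0 := norm_ne_zero_iff.mpr hxj
    positivity
  have hs2 : Summable (fun k : ℕ => (((k:ℝ)+1))⁻¹) :=
    (summable_mul_right_iff (f := fun k : ℕ => (((k:ℝ)+1))⁻¹) hne).mp hsj
  have hs3 : Summable (fun k : ℕ => ((k:ℝ))⁻¹) := by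
    rw [← summable_nat_add_iff 1]
    apply hs2.congr
    intro n
    push_cast
    ring_nf
  exact Real.not_summable_natCast_inv hs3
end
end

section
/- If $s \le q$ and $r \le s$, then a sequence $(x_j)$ in a Banach space $X$ is anisotropic $(s,q,r)$-summable if and only if it is weakly $q$-summable. -/
open scoped BigOperators NNReal ENNReal

noncomputable section

/-!
One direction tests against the single functional sequence `(f, 0, 0, …)`. Conversely, weak
`q`-summability makes `f ↦ (f (x j))_j` a bounded operator `T : X* → ℓ_q` by the closed graph
theorem. For `(x_k^*) ∈ ℓ_r ⊆ ℓ_s`, the sequences `v_k = (|x_k^*(x_j)|^s)_j` lie in `ℓ_{q/s}` with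
`‖v_k‖ = ‖T x_k^*‖^s ≤ ‖T‖^s ‖x_k^*‖^s`, summable in `k`. As `q/s ≥ 1`, `ℓ_{q/s}` is a Banach
space, so `∑_k v_k` converges there, which is exactly anisotropic summability.
-/

theorem Real.rpow_rpow_div_cancel {a : ℝ} (ha : 0 ≤ a) {s : ℝ} (hs : s ≠ 0) (q : ℝ) :
    (a ^ s) ^ (q / s) = a ^ q := by
  rw [← Real.rpow_mul ha, mul_div_cancel₀ q hs]

theorem Real.norm_abs_rpow_rpow_div {s : ℝ} (hs : s ≠ 0) (q a : ℝ) :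
    ‖|a| ^ s‖ ^ (q / s) = ‖a‖ ^ q := by
  rw [Real.norm_eq_abs, abs_of_nonneg (by positivity), Real.rpow_rpow_div_cancel (abs_nonneg a) hs,
    Real.norm_eq_abs]

namespace lp

variable {α : Type*}

theorem memℓp_tsum {E : Type*} [NormedAddCommGroup E] [CompleteSpace E] {p : ℝ≥0∞}
    [Fact (1 ≤ p)] {v : ℕ → lp (fun _ : α => E) p} (hv : Summable fun k => ‖v k‖) :
    Memℓp (fun j => ∑' k, v k j) p := by
  have h : (fun j => ∑' k, v k j) = ⇑(∑' k, v k) := funext fun j =>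
    (hv.of_norm.hasSum.map ((Pi.evalAddMonoidHom _ j).comp (lp.coeFnAddMonoidHom _ p))
      (lp.lipschitzWith_one_eval p j).continuous).tsum_eq
  rw [h]
  exact (∑' k, v k).2

variable {q s : ℝ}

theorem memℓp_abs_rpow (hq : 0 < q) (hs : 0 < s) (y : lp (fun _ : α => ℝ) (ENNReal.ofReal q)) :
    Memℓp (fun j => |y j| ^ s) (ENNReal.ofReal (q / s)) := by
  have hy := (lp.memℓp y).summable (by rwa [ENNReal.toReal_ofReal hq.le])
  rw [ENNReal.toReal_ofReal hq.le] at hy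
  refine memℓp_gen ?_
  rw [ENNReal.toReal_ofReal (by positivity)]
  simpa only [Real.norm_abs_rpow_rpow_div hs.ne'] using hy

def absRpow (hq : 0 < q) (hs : 0 < s) (y : lp (fun _ : α => ℝ) (ENNReal.ofReal q)) :
    lp (fun _ : α => ℝ) (ENNReal.ofReal (q / s)) :=
  ⟨fun j => |y j| ^ s, memℓp_abs_rpow hq hs y⟩

@[simp]
theorem absRpow_apply (hq : 0 < q) (hs : 0 < s) (y : lp (fun _ : α => ℝ) (ENNReal.ofReal q))
    (j : α) : absRpow hq hs y j = |y j| ^ s :=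
  rfl

theorem norm_absRpow (hq : 0 < q) (hs : 0 < s) (y : lp (fun _ : α => ℝ) (ENNReal.ofReal q)) :
    ‖absRpow hq hs y‖ = ‖y‖ ^ s := by
  have hqs : 0 < q / s := by positivity
  refine (Real.rpow_left_inj (lp.norm_nonneg' _) (Real.rpow_nonneg (lp.norm_nonneg' _) _)
    hqs.ne').1 ?_
  have h1 := lp.norm_rpow_eq_tsum (by rwa [ENNReal.toReal_ofReal hqs.le]) (absRpow hq hs y)
  have h2 := lp.norm_rpow_eq_tsum (by rwa [ENNReal.toReal_ofReal hq.le]) y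
  rw [ENNReal.toReal_ofReal hqs.le] at h1
  rw [ENNReal.toReal_ofReal hq.le] at h2
  simp only [h1, Real.rpow_rpow_div_cancel (lp.norm_nonneg' y) hs.ne', h2, absRpow_apply,
    Real.norm_abs_rpow_rpow_div hs.ne']

end lp

section

variable {X : Type*} [NormedAddCommGroup X] [NormedSpace ℝ X]

theorem MemLr.of_exponent_ge {r s : ℝ} (hr : 0 < r) (hrs : r ≤ s) {xs : ℕ → X →L[ℝ] ℝ}
    (h : MemLr r xs) : MemLr s xs := by
  have hs : 0 < s := hr.trans_le hrs
  have hmem : Memℓp xs (ENNReal.ofReal r) := memℓp_gen (by rwa [ENNReal.toReal_ofReal hr.le])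
  have := (hmem.of_exponent_ge (ENNReal.ofReal_le_ofReal hrs)).summable
    (by rwa [ENNReal.toReal_ofReal hs.le])
  rwa [ENNReal.toReal_ofReal hs.le] at this

namespace WeaklySummable

variable {p : ℝ≥0∞} {x : ℕ → X}

def coeffₗ (hx : WeaklySummable p.toReal x) : (X →L[ℝ] ℝ) →ₗ[ℝ] lp (fun _ : ℕ => ℝ) p where
  toFun f := ⟨fun j => f (x j), memℓp_gen (by simpa [Real.norm_eq_abs] using hx f)⟩
  map_add' _ _ := rfl
  map_smul' _ _ := rfl

theorem continuous_coeffₗ [Fact (1 ≤ p)] (hx : WeaklySummable p.toReal x) :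
    Continuous (coeffₗ hx) := by
  refine (coeffₗ hx).continuous_of_seq_closed_graph fun u f y hu hy => ?_
  ext j
  refine tendsto_nhds_unique (((lp.lipschitzWith_one_eval p j).continuous.tendsto y).comp hy) ?_
  exact ((ContinuousLinearMap.apply ℝ ℝ (x j)).continuous.tendsto f).comp hu

def coeffCLM [Fact (1 ≤ p)] (hx : WeaklySummable p.toReal x) :
    (X →L[ℝ] ℝ) →L[ℝ] lp (fun _ : ℕ => ℝ) p :=
  ⟨coeffₗ hx, continuous_coeffₗ hx⟩

end WeaklySummable

theorem AnisoSummable.weaklySummable {s q r : ℝ} (hr : r ≠ 0) (hs : s ≠ 0) {x : ℕ → X}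
    (hx : AnisoSummable s q r x) : WeaklySummable q x := by
  intro f
  have hmem : MemLr r (Pi.single 0 f) := by
    refine summable_of_ne_finset_zero (s := {0}) fun k hk => ?_
    rw [Pi.single_eq_of_ne (by simpa using hk), norm_zero, Real.zero_rpow hr]
  convert (hx _ hmem).2 using 2 with j
  rw [tsum_eq_single 0 fun k hk => by simp [Pi.single_eq_of_ne hk, Real.zero_rpow hs],
    Pi.single_eq_same, Real.rpow_rpow_div_cancel (abs_nonneg _) hs]

theorem WeaklySummable.anisoSummable {s q r : ℝ} (hr : 0 < r) (hrs : r ≤ s) (hsq : s ≤ q)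
    (hq : 1 ≤ q) {x : ℕ → X} (hx : WeaklySummable q x) : AnisoSummable s q r x := by
  intro xs hxs
  have hs : 0 < s := hr.trans_le hrs
  have hq0 : 0 < q := hs.trans_le hsq
  have : Fact (1 ≤ ENNReal.ofReal q) := ⟨by simpa using hq⟩
  have : Fact (1 ≤ ENNReal.ofReal (q / s)) := ⟨by simpa using (one_le_div hs).2 hsq⟩
  let T := coeffCLM (p := ENNReal.ofReal q) (by rwa [ENNReal.toReal_ofReal hq0.le])
  let v k := lp.absRpow hq0 hs (T (xs k))
  have hv : Summable fun k => ‖v k‖ := by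
    refine .of_nonneg_of_le (fun _ => norm_nonneg _) (fun k => ?_)
      ((hxs.of_exponent_ge hr hrs).mul_left (‖T‖ ^ s))
    rw [lp.norm_absRpow]
    exact (Real.rpow_le_rpow (norm_nonneg _) (T.le_opNorm _) hs.le).trans_eq
      (Real.mul_rpow (norm_nonneg _) (norm_nonneg _))
  refine ⟨fun j => hv.of_nonneg_of_le (fun k => by positivity) fun k => ?_, ?_⟩
  · exact (le_abs_self _).trans (lp.norm_apply_le_norm (by simp [hq0, hs]) (v k) j)
  · have hqs : 0 < q / s := div_pos hq0 hs
    have h := (lp.memℓp_tsum hv).summable (by rwa [ENNReal.toReal_ofReal hqs.le])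
    rw [ENNReal.toReal_ofReal hqs.le] at h
    refine h.congr fun j => ?_
    change |∑' k, |xs k (x j)| ^ s| ^ (q / s) = _
    rw [abs_of_nonneg (tsum_nonneg fun k => by positivity)]

end

theorem stmt3_general {X : Type*} [NormedAddCommGroup X] [NormedSpace ℝ X]
    {s q r : ℝ} (hr : 1 ≤ r) (hrs : r ≤ s) (hsq : s ≤ q)
    (x : ℕ → X) :
    AnisoSummable s q r x ↔ WeaklySummable q x :=
  ⟨AnisoSummable.weaklySummable (by linarith) (by linarith),
    WeaklySummable.anisoSummable (by linarith) hrs hsq (by linarith)⟩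

theorem stmt3 {X : Type*} [NormedAddCommGroup X] [NormedSpace ℝ X] [CompleteSpace X]
    {s q r : ℝ} (hr : 1 ≤ r) (hrs : r ≤ s) (hs : 1 ≤ s) (hsq : s ≤ q)
    (x : ℕ → X) :
    AnisoSummable s q r x ↔ WeaklySummable q x :=
  stmt3_general hr hrs hsq x

end
end

section
/- Let $r_2 \le r_1 \le s_1 \le s_2$, $q_1 \le q_2 < s_2$ and $q_1 < s_1$ (all in $[1,\infty)$). Then for each Banach space $X$, every anisotropic $(s_1,q_1,r_1)$-summable sequence is anisotropic $(s_2,q_2,r_2)$-summable, and $\|(x_j)\|_{A(s_2,q_2,r_2)} \le \|(x_j)\|_{A(s_1,q_1,r_1)}$. -/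
open scoped BigOperators NNReal ENNReal

noncomputable section

/-!
For exponents `p ≤ q` the unit ball of `ℓ_p` lies in that of `ℓ_q`. Applied to each row
`(|x_k^*(x_j)|)_k` and then to the sequence of row norms, this gives
`‖·‖_{ℓ_{q₂}(ℓ_{s₂})} ≤ ‖·‖_{ℓ_{q₁}(ℓ_{s₁})}`, while `r₂ ≤ r₁` puts the unit ball of `ℓ_{r₂}(X*)`
inside that of `ℓ_{r₁}(X*)`. So the second supremum is over a smaller set of smaller values.
Since `⨆` over reals is junk on unbounded sets, the argument also needs that the supremum defining
`anisoNorm` is bounded, which follows from a gliding hump.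
-/

section ellNorm

variable {ι κ : Type*} {a b : ι → ℝ} {p q : ℝ}

def ellNorm (p : ℝ) (a : ι → ℝ) : ℝ :=
  (∑' i, a i ^ p) ^ (1 / p)

lemma ellNorm_nonneg (ha : ∀ i, 0 ≤ a i) (p : ℝ) : 0 ≤ ellNorm p a :=
  Real.rpow_nonneg (tsum_nonneg fun i => Real.rpow_nonneg (ha i) p) _

lemma ellNorm_rpow (ha : ∀ i, 0 ≤ a i) (p q : ℝ) :
    ellNorm p a ^ q = (∑' i, a i ^ p) ^ (q / p) := by
  rw [ellNorm, ← Real.rpow_mul (tsum_nonneg fun i => Real.rpow_nonneg (ha i) p),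
    one_div_mul_eq_div]

lemma ellNorm_rpow_self (ha : ∀ i, 0 ≤ a i) (hp : p ≠ 0) :
    ellNorm p a ^ p = ∑' i, a i ^ p := by
  rw [ellNorm_rpow ha, div_self hp, Real.rpow_one]

lemma tsum_rpow_le_one_of_ellNorm_le_one (ha : ∀ i, 0 ≤ a i) (hp : 0 < p)
    (h : ellNorm p a ≤ 1) : ∑' i, a i ^ p ≤ 1 := by
  rw [← ellNorm_rpow_self ha hp.ne']
  exact Real.rpow_le_one (ellNorm_nonneg ha p) h hp.le

lemma le_ellNorm (ha : ∀ i, 0 ≤ a i) (hp : 0 < p) (hs : Summable fun i => a i ^ p) (i : ι) :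
    a i ≤ ellNorm p a := by
  rw [← Real.rpow_le_rpow_iff (ha i) (ellNorm_nonneg ha p) hp, ellNorm_rpow_self ha hp.ne']
  exact hs.le_tsum i fun j _ => Real.rpow_nonneg (ha j) p

lemma ellNorm_le_ellNorm (ha : ∀ i, 0 ≤ a i) (hab : ∀ i, a i ≤ b i) (hp : 0 ≤ p)
    (hb : Summable fun i => b i ^ p) : ellNorm p a ≤ ellNorm p b := by
  have hle : ∀ i, a i ^ p ≤ b i ^ p := fun i => Real.rpow_le_rpow (ha i) (hab i) hp
  refine Real.rpow_le_rpow (tsum_nonneg fun i => Real.rpow_nonneg (ha i) p) ?_ (by positivity)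
  exact (hb.of_nonneg_of_le (fun i => Real.rpow_nonneg (ha i) p) hle).tsum_le_tsum hle hb

lemma ellNorm_comp_le {e : κ → ι} (he : Function.Injective e) (ha : ∀ i, 0 ≤ a i) (hp : 0 ≤ p)
    (hs : Summable fun i => a i ^ p) : ellNorm p (a ∘ e) ≤ ellNorm p a :=
  Real.rpow_le_rpow (tsum_nonneg fun k => Real.rpow_nonneg (ha (e k)) p)
    (tsum_comp_le_tsum_of_inj hs (fun i => Real.rpow_nonneg (ha i) p) he) (by positivity)

lemma ellNorm_const_mul {c : ℝ} (hc : 0 ≤ c) (ha : ∀ i, 0 ≤ a i) (hp : p ≠ 0) :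
    ellNorm p (fun i => c * a i) = c * ellNorm p a := by
  simp only [ellNorm, Real.mul_rpow hc (ha _), tsum_mul_left]
  rw [Real.mul_rpow (Real.rpow_nonneg hc p) (tsum_nonneg fun i => Real.rpow_nonneg (ha i) p),
    ← Real.rpow_mul hc, mul_one_div_cancel hp, Real.rpow_one]

lemma rpow_le_ellNorm_rpow_sub_mul (ha : ∀ i, 0 ≤ a i) (hp : 0 < p) (hpq : p ≤ q)
    (hs : Summable fun i => a i ^ p) (i : ι) :
    a i ^ q ≤ ellNorm p a ^ (q - p) * a i ^ p := by
  have hq : q - p + p ≠ 0 := by linarith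
  calc a i ^ q = a i ^ (q - p) * a i ^ p := by rw [← Real.rpow_add' (ha i) hq, sub_add_cancel]
    _ ≤ ellNorm p a ^ (q - p) * a i ^ p :=
      mul_le_mul_of_nonneg_right
        (Real.rpow_le_rpow (ha i) (le_ellNorm ha hp hs i) (by linarith)) (Real.rpow_nonneg (ha i) p)

lemma summable_rpow_of_exponent_le (ha : ∀ i, 0 ≤ a i) (hp : 0 < p) (hpq : p ≤ q)
    (hs : Summable fun i => a i ^ p) : Summable fun i => a i ^ q :=
  (hs.mul_left _).of_nonneg_of_le (fun i => Real.rpow_nonneg (ha i) q)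
    (rpow_le_ellNorm_rpow_sub_mul ha hp hpq hs)

lemma ellNorm_le_ellNorm_of_exponent_le (ha : ∀ i, 0 ≤ a i) (hp : 0 < p) (hpq : p ≤ q)
    (hs : Summable fun i => a i ^ p) : ellNorm q a ≤ ellNorm p a := by
  have hq : 0 < q := hp.trans_le hpq
  have hN := ellNorm_nonneg ha p
  rw [← Real.rpow_le_rpow_iff (ellNorm_nonneg ha q) hN hq, ellNorm_rpow_self ha hq.ne']
  calc ∑' i, a i ^ q ≤ ∑' i, ellNorm p a ^ (q - p) * a i ^ p :=
        (summable_rpow_of_exponent_le ha hp hpq hs).tsum_le_tsum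
          (rpow_le_ellNorm_rpow_sub_mul ha hp hpq hs) (hs.mul_left _)
    _ = ellNorm p a ^ q := by
      rw [tsum_mul_left, ← ellNorm_rpow_self ha hp.ne', ← Real.rpow_add' hN (by linarith),
        sub_add_cancel]

end ellNorm

section mixedNorm

variable {ι κ κ' : Type*} {f : ι → κ → ℝ} {s₁ s₂ q₁ q₂ : ℝ}

def mixedNorm (s q : ℝ) (f : ι → κ → ℝ) : ℝ :=
  ellNorm q fun j => ellNorm s (f j)

lemma mixedNorm_const_mul {c : ℝ} (hc : 0 ≤ c) (hf : ∀ j k, 0 ≤ f j k) {s q : ℝ} (hs : s ≠ 0)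
    (hq : q ≠ 0) : mixedNorm s q (fun j k => c * f j k) = c * mixedNorm s q f := by
  simp only [mixedNorm, ellNorm_const_mul hc (hf _) hs]
  exact ellNorm_const_mul hc (fun j => ellNorm_nonneg (hf j) s) hq

lemma mixedNorm_comp_le {e : κ' → κ} (he : Function.Injective e) (hf : ∀ j k, 0 ≤ f j k)
    {s q : ℝ} (hs : 0 ≤ s) (hq : 0 ≤ q) (hin : ∀ j, Summable fun k => f j k ^ s)
    (hout : Summable fun j => ellNorm s (f j) ^ q) :
    mixedNorm s q (fun j k => f j (e k)) ≤ mixedNorm s q f :=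
  ellNorm_le_ellNorm (fun j => ellNorm_nonneg (fun k => hf j (e k)) s)
    (fun j => ellNorm_comp_le he (hf j) hs (hin j)) hq hout

lemma summable_ellNorm_rpow_of_exponent_le (hf : ∀ j k, 0 ≤ f j k) (hs₁ : 0 < s₁) (hs : s₁ ≤ s₂)
    (hq₁ : 0 < q₁) (hq : q₁ ≤ q₂) (hin : ∀ j, Summable fun k => f j k ^ s₁)
    (hout : Summable fun j => ellNorm s₁ (f j) ^ q₁) :
    Summable fun j => ellNorm s₂ (f j) ^ q₂ :=
  (summable_rpow_of_exponent_le (fun j => ellNorm_nonneg (hf j) s₁) hq₁ hq hout).of_nonneg_of_le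
    (fun j => Real.rpow_nonneg (ellNorm_nonneg (hf j) s₂) q₂)
    fun j => Real.rpow_le_rpow (ellNorm_nonneg (hf j) s₂)
      (ellNorm_le_ellNorm_of_exponent_le (hf j) hs₁ hs (hin j)) (by linarith)

lemma mixedNorm_le_mixedNorm_of_exponent_le (hf : ∀ j k, 0 ≤ f j k) (hs₁ : 0 < s₁) (hs : s₁ ≤ s₂)
    (hq₁ : 0 < q₁) (hq : q₁ ≤ q₂) (hin : ∀ j, Summable fun k => f j k ^ s₁)
    (hout : Summable fun j => ellNorm s₁ (f j) ^ q₁) :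
    mixedNorm s₂ q₂ f ≤ mixedNorm s₁ q₁ f :=
  calc mixedNorm s₂ q₂ f ≤ ellNorm q₂ fun j => ellNorm s₁ (f j) :=
        ellNorm_le_ellNorm (fun j => ellNorm_nonneg (hf j) s₂)
          (fun j => ellNorm_le_ellNorm_of_exponent_le (hf j) hs₁ hs (hin j)) (by linarith)
          (summable_rpow_of_exponent_le (fun j => ellNorm_nonneg (hf j) s₁) hq₁ hq hout)
    _ ≤ mixedNorm s₁ q₁ f :=
        ellNorm_le_ellNorm_of_exponent_le (fun j => ellNorm_nonneg (hf j) s₁) hq₁ hq hout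

end mixedNorm

section anisotropic

variable {X : Type*} [NormedAddCommGroup X] [NormedSpace ℝ X] {s q r : ℝ} {x : ℕ → X}
  {xs : ℕ → X →L[ℝ] ℝ}

def absPairing (xs : ℕ → X →L[ℝ] ℝ) (x : ℕ → X) (j k : ℕ) : ℝ :=
  |xs k (x j)|

lemma ellNorm_absPairing_rpow (j : ℕ) :
    ellNorm s (absPairing xs x j) ^ q = (∑' k, |xs k (x j)| ^ s) ^ (q / s) :=
  ellNorm_rpow (fun _ => abs_nonneg _) s q

lemma anisoSummable_iff : AnisoSummable s q r x ↔ ∀ xs, MemLr r xs →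
    (∀ j, Summable fun k => absPairing xs x j k ^ s) ∧
      Summable fun j => ellNorm s (absPairing xs x j) ^ q := by
  simp only [AnisoSummable, ellNorm_absPairing_rpow, absPairing]

lemma anisoNorm_eq_iSup_mixedNorm : anisoNorm s q r x =
    ⨆ xs : {xs : ℕ → X →L[ℝ] ℝ // MemLr r xs ∧ lrNorm r xs ≤ 1},
      mixedNorm s q (absPairing xs.1 x) := by
  simp only [anisoNorm, mixedNorm, ellNorm, ← ellNorm_absPairing_rpow]

lemma MemLr.of_exponent_le {r₁ r₂ : ℝ} (hr₂ : 0 < r₂) (hr : r₂ ≤ r₁) (h : MemLr r₂ xs) :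
    MemLr r₁ xs :=
  summable_rpow_of_exponent_le (fun _ => norm_nonneg _) hr₂ hr h

lemma lrNorm_le_lrNorm_of_exponent_le {r₁ r₂ : ℝ} (hr₂ : 0 < r₂) (hr : r₂ ≤ r₁)
    (h : MemLr r₂ xs) : lrNorm r₁ xs ≤ lrNorm r₂ xs :=
  ellNorm_le_ellNorm_of_exponent_le (fun _ => norm_nonneg _) hr₂ hr h

lemma AnisoSummable.of_exponent_le {s₁ s₂ q₁ q₂ r₁ r₂ : ℝ} (hr₂ : 0 < r₂) (hr : r₂ ≤ r₁)
    (hs₁ : 0 < s₁) (hs : s₁ ≤ s₂) (hq₁ : 0 < q₁) (hq : q₁ ≤ q₂)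
    (hx : AnisoSummable s₁ q₁ r₁ x) : AnisoSummable s₂ q₂ r₂ x := by
  rw [anisoSummable_iff] at hx ⊢
  intro xs hxs
  obtain ⟨hin, hout⟩ := hx xs (hxs.of_exponent_le hr₂ hr)
  exact ⟨fun j => summable_rpow_of_exponent_le (fun _ => abs_nonneg _) hs₁ hs (hin j),
    summable_ellNorm_rpow_of_exponent_le (fun _ _ => abs_nonneg _) hs₁ hs hq₁ hq hin hout⟩

def interleave {E : Type*} [SMul ℝ E] (c : ℕ → ℝ) (u : ℕ → ℕ → E) (m : ℕ) : E :=
  c m.unpair.1 • u m.unpair.1 m.unpair.2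

lemma interleave_pair {E : Type*} [SMul ℝ E] (c : ℕ → ℝ) (u : ℕ → ℕ → E) (n k : ℕ) :
    interleave c u (Nat.pair n k) = c n • u n k := by
  simp only [interleave, Nat.unpair_pair]

lemma memLr_interleave {c : ℕ → ℝ} {u : ℕ → ℕ → X →L[ℝ] ℝ} (hr : 0 < r)
    (hu : ∀ n, MemLr r (u n)) (hu₁ : ∀ n, lrNorm r (u n) ≤ 1)
    (hc : Summable fun n => |c n| ^ r) : MemLr r (interleave c u) := by
  have hterm : ∀ n k, ‖interleave c u (Nat.pair n k)‖ ^ r = |c n| ^ r * ‖u n k‖ ^ r := by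
    intro n k
    rw [interleave_pair, norm_smul, Real.norm_eq_abs,
      Real.mul_rpow (abs_nonneg _) (norm_nonneg _)]
  have hprod : Summable fun p : ℕ × ℕ => ‖interleave c u (Nat.pair p.1 p.2)‖ ^ r := by
    refine (summable_prod_of_nonneg fun _ => Real.rpow_nonneg (norm_nonneg _) r).mpr
      ⟨fun n => ?_, ?_⟩
    · simpa only [hterm] using (hu n).mul_left _
    · refine hc.of_nonneg_of_le
        (fun n => tsum_nonneg fun _ => Real.rpow_nonneg (norm_nonneg _) r) fun n => ?_
      simp only [hterm, tsum_mul_left]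
      exact mul_le_of_le_one_right (Real.rpow_nonneg (abs_nonneg _) r)
        (tsum_rpow_le_one_of_ellNorm_le_one (fun _ => norm_nonneg _) hr (hu₁ n))
  exact Nat.pairEquiv.summable_iff.mp hprod

/-- A gliding hump: if the anisotropic norms over the unit ball of `ℓ_r(X*)` were unbounded,
the sequences `u n` with norm `> 2 ^ n * n`, scaled by `2⁻¹ ^ n` and interleaved, would form one
element of `ℓ_r(X*)` whose anisotropic norm exceeds every `n`. -/
lemma AnisoSummable.bddAbove_mixedNorm (hr : 0 < r) (hs : 0 < s) (hq : 0 < q)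
    (hx : AnisoSummable s q r x) :
    BddAbove (Set.range fun xs : {xs : ℕ → X →L[ℝ] ℝ // MemLr r xs ∧ lrNorm r xs ≤ 1} =>
      mixedNorm s q (absPairing xs.1 x)) := by
  by_contra hunbdd
  have hlarge : ∀ n : ℕ, ∃ xs : {xs : ℕ → X →L[ℝ] ℝ // MemLr r xs ∧ lrNorm r xs ≤ 1},
      2 ^ n * n < mixedNorm s q (absPairing xs.1 x) := by
    intro n
    obtain ⟨_, ⟨xs, rfl⟩, hlt⟩ := not_bddAbove_iff.mp hunbdd (2 ^ n * n)
    exact ⟨xs, hlt⟩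
  choose u hu using hlarge
  have hc : Summable fun n : ℕ => |(2⁻¹ : ℝ) ^ n| ^ r := by
    simp_rw [abs_pow, abs_inv, abs_two, ← Real.rpow_natCast_mul (by norm_num : (0 : ℝ) ≤ 2⁻¹),
      mul_comm _ r, Real.rpow_mul_natCast (by norm_num : (0 : ℝ) ≤ 2⁻¹)]
    exact summable_geometric_of_lt_one (by positivity)
      (Real.rpow_lt_one (by norm_num) (by norm_num) hr)
  set y := interleave (fun n => (2⁻¹ : ℝ) ^ n) fun n => (u n).1 with hy
  obtain ⟨hin, hout⟩ := anisoSummable_iff.mp hx y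
    (memLr_interleave hr (fun n => (u n).2.1) (fun n => (u n).2.2) hc)
  have hfiber : ∀ n : ℕ, (n : ℝ) < mixedNorm s q (absPairing y x) := fun n =>
    calc (n : ℝ) = 2⁻¹ ^ n * (2 ^ n * n) := by rw [← mul_assoc, ← mul_pow]; norm_num
      _ < 2⁻¹ ^ n * mixedNorm s q (absPairing (u n).1 x) :=
        mul_lt_mul_of_pos_left (hu n) (by positivity)
      _ = mixedNorm s q fun j k => absPairing y x j (Nat.pair n k) := by
        rw [← mixedNorm_const_mul (f := absPairing (u n).1 x) (by positivity)
          (fun _ _ => abs_nonneg _) hs.ne' hq.ne']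
        congr 1
        funext j k
        simp only [absPairing, hy, interleave_pair, smul_apply, smul_eq_mul,
          abs_mul, abs_pow, abs_inv, abs_two]
      _ ≤ mixedNorm s q (absPairing y x) :=
        mixedNorm_comp_le (f := absPairing y x) (e := Nat.pair n)
          (fun k k' h => (Nat.pair_eq_pair.mp h).2) (fun _ _ => abs_nonneg _) hs.le hq.le hin hout
  obtain ⟨n, hn⟩ := exists_nat_gt (mixedNorm s q (absPairing y x))
  exact (hfiber n).not_gt hn

end anisotropic

theorem stmt4_general {X : Type*} [NormedAddCommGroup X] [NormedSpace ℝ X]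
    {s₁ s₂ q₁ q₂ r₁ r₂ : ℝ} (hr₂ : 1 ≤ r₂) (hr : r₂ ≤ r₁) (hs : s₁ ≤ s₂)
    (hq₁ : 1 ≤ q₁) (hq : q₁ ≤ q₂) (hq₁s : q₁ < s₁)
    (x : ℕ → X) (hx : AnisoSummable s₁ q₁ r₁ x) :
    AnisoSummable s₂ q₂ r₂ x ∧ anisoNorm s₂ q₂ r₂ x ≤ anisoNorm s₁ q₁ r₁ x := by
  have hr₂_pos : 0 < r₂ := by linarith
  have hq₁_pos : 0 < q₁ := by linarith
  have hs₁_pos : 0 < s₁ := by linarith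
  refine ⟨hx.of_exponent_le hr₂_pos hr hs₁_pos hs hq₁_pos hq, ?_⟩
  have hbdd := hx.bddAbove_mixedNorm (hr₂_pos.trans_le hr) hs₁_pos hq₁_pos
  rw [anisoNorm_eq_iSup_mixedNorm, anisoNorm_eq_iSup_mixedNorm]
  refine Real.iSup_le (fun ⟨xs, hxs, hxs₁⟩ => ?_) <| Real.iSup_nonneg fun _ =>
    ellNorm_nonneg (fun _ => ellNorm_nonneg (fun _ => abs_nonneg _) _) _
  have hxs' : MemLr r₁ xs ∧ lrNorm r₁ xs ≤ 1 :=
    ⟨hxs.of_exponent_le hr₂_pos hr, (lrNorm_le_lrNorm_of_exponent_le hr₂_pos hr hxs).trans hxs₁⟩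
  obtain ⟨hin, hout⟩ := anisoSummable_iff.mp hx xs hxs'.1
  calc mixedNorm s₂ q₂ (absPairing xs x)
      ≤ mixedNorm s₁ q₁ (absPairing xs x) := mixedNorm_le_mixedNorm_of_exponent_le
        (fun _ _ => abs_nonneg _) hs₁_pos hs hq₁_pos hq hin hout
    _ ≤ _ := le_ciSup hbdd ⟨xs, hxs'⟩

theorem stmt4 {X : Type*} [NormedAddCommGroup X] [NormedSpace ℝ X] [CompleteSpace X]
    {s₁ s₂ q₁ q₂ r₁ r₂ : ℝ} (hr₂ : 1 ≤ r₂) (hr : r₂ ≤ r₁) (hrs : r₁ ≤ s₁) (hs : s₁ ≤ s₂)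
    (hq₁ : 1 ≤ q₁) (hq : q₁ ≤ q₂) (hq₂s : q₂ < s₂) (hq₁s : q₁ < s₁)
    (x : ℕ → X) (hx : AnisoSummable s₁ q₁ r₁ x) :
    AnisoSummable s₂ q₂ r₂ x ∧ anisoNorm s₂ q₂ r₂ x ≤ anisoNorm s₁ q₁ r₁ x :=
  stmt4_general hr₂ hr hs hq₁ hq hq₁s x hx
end
end

section
/- Let $1 \le q < s$, define $t$ by $1/q = 1/s + 1/t$, and let $(x_j)$ be a weakly $s$-summable sequence in a Banach space $X$. Then for every scalar sequence $(\lambda_j) \in \ell_t$, the sequence $(\lambda_j x_j)$ is anisotropic $(s,q,r)$-summable for any $1 \le r \le s$, with $\|(\lambda_j x_j)\|_{A(s,q,r)} \le \|(\lambda_j)\|_t \cdot \|(x_j)\|_{w,s}$. -/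
open scoped BigOperators NNReal ENNReal

noncomputable section

/-!
For `‖f‖ ≤ 1` the sums `∑ⱼ |f (x j)|^s` are uniformly bounded by the uniform boundedness
principle on the Banach space `X*`, so the supremum defining `weakNorm s x` is a genuine one and
`∑ⱼ |f (x j)|^s ≤ (‖f‖ · ‖x‖_{w,s})^s`. Summing this over a family `(x_k*) ∈ ℓ_r(X*) ⊆ ℓ_s(X*)` and
exchanging the order of summation gives `∑ⱼ aⱼ ≤ (‖(x_k*)‖_r ‖x‖_{w,s})^s` with
`aⱼ = ∑ₖ |x_k* (x j)|^s`. The `j`-th term of the anisotropic norm of `(λⱼ xⱼ)` is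
`(|λⱼ| aⱼ^{1/s})^q`, and Hölder's inequality for `1/q = 1/t + 1/s` finishes the proof.
-/

theorem summable_rpow_and_tsum_rpow_le_of_le {ι : Type*} {a : ι → ℝ} {r s : ℝ}
    (ha : ∀ k, 0 ≤ a k) (hr : 0 < r) (hrs : r ≤ s) (h : Summable fun k => a k ^ r) :
    (Summable fun k => a k ^ s) ∧ ∑' k, a k ^ s ≤ ((∑' k, a k ^ r) ^ (1 / r)) ^ s := by
  have har : ∀ k, 0 ≤ a k ^ r := fun k => Real.rpow_nonneg (ha k) r
  have hRr : ((∑' k, a k ^ r) ^ (1 / r)) ^ r = ∑' k, a k ^ r := by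
    rw [one_div, Real.rpow_inv_rpow (tsum_nonneg har) hr.ne']
  set R := (∑' k, a k ^ r) ^ (1 / r)
  have hR0 : 0 ≤ R := Real.rpow_nonneg (tsum_nonneg har) _
  have hsplit : ∀ {b : ℝ}, 0 ≤ b → b ^ s = b ^ (s - r) * b ^ r := fun hb => by
    rw [← Real.rpow_add' hb (by linarith), sub_add_cancel]
  have hle : ∀ k, a k ≤ R := fun k => by
    rw [← Real.rpow_le_rpow_iff (ha k) hR0 hr, hRr]
    exact h.le_tsum k fun m _ => har m
  have hdom : ∀ k, a k ^ s ≤ R ^ (s - r) * a k ^ r := fun k => by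
    rw [hsplit (ha k)]
    exact mul_le_mul_of_nonneg_right (Real.rpow_le_rpow (ha k) (hle k) (by linarith)) (har k)
  have hsum : Summable fun k => a k ^ s :=
    (h.mul_left _).of_nonneg_of_le (fun k => Real.rpow_nonneg (ha k) s) hdom
  refine ⟨hsum, ?_⟩
  calc ∑' k, a k ^ s ≤ ∑' k, R ^ (s - r) * a k ^ r := hsum.tsum_le_tsum hdom (h.mul_left _)
    _ = R ^ s := by rw [tsum_mul_left, ← hRr, ← hsplit hR0]

theorem summable_tsum_and_tsum_comm_of_nonneg {β γ : Type*} {F : β → γ → ℝ}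
    (hF : ∀ k j, 0 ≤ F k j)
    (hrow : ∀ k, Summable (F k)) (hcol : Summable fun k => ∑' j, F k j) :
    (Summable fun j => ∑' k, F k j) ∧ ∑' j, ∑' k, F k j = ∑' k, ∑' j, F k j := by
  have hprod : Summable fun kj : β × γ => F kj.1 kj.2 :=
    (summable_prod_of_nonneg fun kj => hF kj.1 kj.2).2 ⟨hrow, hcol⟩
  refine ⟨((summable_prod_of_nonneg fun jk => hF jk.2 jk.1).1 hprod.prod_symm).2, ?_⟩
  exact Summable.tsum_comm (f := F) hprod

section WeakNorm

variable {X : Type*} [NormedAddCommGroup X] [NormedSpace ℝ X] {s : ℝ} {x : ℕ → X}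

/-- By the uniform boundedness principle on the Banach space `X*`, applied to the maps
`f ↦ (f (x j))_{j ∈ F} ∈ ℓ_s(F)` over all finite `F`. -/
theorem WeaklySummable.exists_tsum_rpow_le (hs : 1 ≤ s) (hx : WeaklySummable s x) :
    ∃ C, ∀ f : X →L[ℝ] ℝ, ‖f‖ ≤ 1 → ∑' j, |f (x j)| ^ s ≤ C := by
  have hs0 : 0 < s := zero_lt_one.trans_le hs
  set p := ENNReal.ofReal s
  have : Fact (1 ≤ p) := ⟨by simpa [p] using ENNReal.ofReal_le_ofReal hs⟩
  have hp : p.toReal = s := ENNReal.toReal_ofReal hs0.le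
  let T : Finset ℕ → (X →L[ℝ] ℝ) →L[ℝ] lp (fun _ : ℕ => ℝ) p := fun F =>
    ∑ j ∈ F, lp.singleContinuousLinearMap ℝ _ p j ∘L ContinuousLinearMap.apply ℝ ℝ (x j)
  have hT : ∀ F f, ‖T F f‖ ^ s = ∑ j ∈ F, |f (x j)| ^ s := by
    intro F f
    have := lp.norm_sum_single (hp ▸ hs0) (fun j => f (x j)) F
    rw [hp] at this
    simpa [T] using this
  obtain ⟨C, hC⟩ := banach_steinhaus (g := T) fun f =>
    ⟨(∑' j, |f (x j)| ^ s) ^ s⁻¹, fun F => by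
      rw [← Real.rpow_le_rpow_iff (norm_nonneg _) (by positivity) hs0,
        Real.rpow_inv_rpow (tsum_nonneg fun _ => by positivity) hs0.ne', hT]
      exact (hx f).sum_le_tsum F fun _ _ => by positivity⟩
  refine ⟨C ^ s, fun f hf => Real.tsum_le_of_sum_le (fun _ => by positivity) fun F => ?_⟩
  rw [← hT]
  exact Real.rpow_le_rpow (norm_nonneg _) (by simpa using (T F).le_of_opNorm_le_of_le (hC F) hf)
    hs0.le

theorem tsum_abs_smul_apply_rpow (c : ℝ) (f : X →L[ℝ] ℝ) :
    ∑' j, |(c • f) (x j)| ^ s = |c| ^ s * ∑' j, |f (x j)| ^ s := by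
  simp only [smul_apply, smul_eq_mul, abs_mul,
    Real.mul_rpow (abs_nonneg _) (abs_nonneg _), tsum_mul_left]

theorem weakNorm_nonneg : 0 ≤ weakNorm s x :=
  Real.iSup_nonneg fun _ => Real.rpow_nonneg (tsum_nonneg fun _ => by positivity) _

theorem WeaklySummable.tsum_rpow_le (hs : 1 ≤ s) (hx : WeaklySummable s x) (f : X →L[ℝ] ℝ) :
    ∑' j, |f (x j)| ^ s ≤ (‖f‖ * weakNorm s x) ^ s := by
  have hs0 : 0 < s := zero_lt_one.trans_le hs
  obtain ⟨C, hC⟩ := hx.exists_tsum_rpow_le hs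
  have hball : ∀ g : X →L[ℝ] ℝ, ‖g‖ ≤ 1 → ∑' j, |g (x j)| ^ s ≤ weakNorm s x ^ s := by
    intro g hg
    have hbdd : BddAbove (Set.range fun g : {g : X →L[ℝ] ℝ // ‖g‖ ≤ 1} =>
        (∑' j, |g.1 (x j)| ^ s) ^ (1 / s)) := by
      refine ⟨C ^ (1 / s), Set.forall_mem_range.2 fun g => ?_⟩
      exact Real.rpow_le_rpow (tsum_nonneg fun _ => by positivity) (hC g g.2) (by positivity)
    rw [← Real.rpow_inv_le_iff_of_pos (tsum_nonneg fun _ => by positivity) weakNorm_nonneg hs0,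
      ← one_div]
    exact le_ciSup hbdd ⟨g, hg⟩
  rcases eq_or_ne f 0 with rfl | hf
  · simp [Real.zero_rpow hs0.ne']
  have hf0 : 0 < ‖f‖ := norm_pos_iff.2 hf
  have hunit : ‖‖f‖⁻¹ • f‖ ≤ 1 := by
    rw [norm_smul, norm_inv, norm_norm, inv_mul_cancel₀ hf0.ne']
  calc ∑' j, |f (x j)| ^ s = ‖f‖ ^ s * ∑' j, |(‖f‖⁻¹ • f) (x j)| ^ s := by
        rw [tsum_abs_smul_apply_rpow, abs_inv, abs_norm, ← mul_assoc, Real.inv_rpow hf0.le,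
          mul_inv_cancel₀ (by positivity), one_mul]
    _ ≤ ‖f‖ ^ s * weakNorm s x ^ s := by gcongr; exact hball _ hunit
    _ = (‖f‖ * weakNorm s x) ^ s := (Real.mul_rpow hf0.le weakNorm_nonneg).symm

end WeakNorm

section Anisotropic

variable {X : Type*} [NormedAddCommGroup X] [NormedSpace ℝ X] {r s : ℝ} {x : ℕ → X}
  {xs : ℕ → X →L[ℝ] ℝ}

theorem lrNorm_nonneg : 0 ≤ lrNorm r xs :=
  Real.rpow_nonneg (tsum_nonneg fun _ => by positivity) _

theorem WeaklySummable.tsum_tsum_rpow_le (hs : 1 ≤ s) (hr : 0 < r) (hrs : r ≤ s)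
    (hx : WeaklySummable s x) (hxs : MemLr r xs) :
    (∀ j, Summable fun k => |xs k (x j)| ^ s) ∧ (Summable fun j => ∑' k, |xs k (x j)| ^ s) ∧
      ∑' j, ∑' k, |xs k (x j)| ^ s ≤ (lrNorm r xs * weakNorm s x) ^ s := by
  have hs0 : 0 < s := zero_lt_one.trans_le hs
  obtain ⟨hsum_s, hle_s⟩ :=
    summable_rpow_and_tsum_rpow_le_of_le (fun k => norm_nonneg (xs k)) hr hrs hxs
  have hcol : ∀ k, ∑' j, |xs k (x j)| ^ s ≤ ‖xs k‖ ^ s * weakNorm s x ^ s := fun k =>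
    (hx.tsum_rpow_le hs (xs k)).trans_eq (Real.mul_rpow (norm_nonneg _) weakNorm_nonneg)
  have hcolsum : Summable fun k => ∑' j, |xs k (x j)| ^ s :=
    (hsum_s.mul_right _).of_nonneg_of_le (fun _ => tsum_nonneg fun _ => by positivity) hcol
  obtain ⟨hsum, hcomm⟩ := summable_tsum_and_tsum_comm_of_nonneg
    (F := fun k j => |xs k (x j)| ^ s) (fun _ _ => by positivity) (fun k => hx (xs k)) hcolsum
  have hrow : ∀ j, Summable fun k => |xs k (x j)| ^ s := fun j =>
    (hsum_s.mul_right (‖x j‖ ^ s)).of_nonneg_of_le (fun _ => by positivity) fun k => by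
      rw [← Real.mul_rpow (norm_nonneg _) (norm_nonneg _)]
      exact Real.rpow_le_rpow (abs_nonneg _) ((xs k).le_opNorm (x j)) hs0.le
  refine ⟨hrow, hsum, ?_⟩
  calc ∑' j, ∑' k, |xs k (x j)| ^ s = ∑' k, ∑' j, |xs k (x j)| ^ s := hcomm
    _ ≤ ∑' k, ‖xs k‖ ^ s * weakNorm s x ^ s :=
        hcolsum.tsum_le_tsum hcol (hsum_s.mul_right _)
    _ = (∑' k, ‖xs k‖ ^ s) * weakNorm s x ^ s := tsum_mul_right
    _ ≤ lrNorm r xs ^ s * weakNorm s x ^ s :=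
        mul_le_mul_of_nonneg_right hle_s (Real.rpow_nonneg weakNorm_nonneg s)
    _ = (lrNorm r xs * weakNorm s x) ^ s := (Real.mul_rpow lrNorm_nonneg weakNorm_nonneg).symm

theorem abs_apply_smul_rpow (φ : X →L[ℝ] ℝ) (c : ℝ) (y : X) :
    |φ (c • y)| ^ s = |c| ^ s * |φ y| ^ s := by
  rw [map_smul, smul_eq_mul, abs_mul, Real.mul_rpow (abs_nonneg _) (abs_nonneg _)]

theorem WeaklySummable.smul_anisotropic_bound {q t : ℝ} (hs : 1 ≤ s) (hr : 0 < r) (hrs : r ≤ s)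
    (htriple : t.HolderTriple s q) (hx : WeaklySummable s x) {lam : ℕ → ℝ}
    (hlam : Summable fun j => |lam j| ^ t) (hxs : MemLr r xs) :
    (∀ j, Summable fun k => |xs k (lam j • x j)| ^ s) ∧
      (Summable fun j => (∑' k, |xs k (lam j • x j)| ^ s) ^ (q / s)) ∧
      (∑' j, (∑' k, |xs k (lam j • x j)| ^ s) ^ (q / s)) ^ (1 / q) ≤
        (∑' j, |lam j| ^ t) ^ (1 / t) * (lrNorm r xs * weakNorm s x) := by
  have hs0 : 0 < s := zero_lt_one.trans_le hs
  obtain ⟨hrow, hsum, hbound⟩ := hx.tsum_tsum_rpow_le hs hr hrs hxs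
  set a := fun j => ∑' k, |xs k (x j)| ^ s
  have ha : ∀ j, 0 ≤ a j := fun j => tsum_nonneg fun _ => by positivity
  have hroot : ∀ j, (a j ^ (1 / s)) ^ s = a j := fun j => by
    rw [one_div, Real.rpow_inv_rpow (ha j) hs0.ne']
  have hterm : ∀ j,
      (∑' k, |xs k (lam j • x j)| ^ s) ^ (q / s) = (|lam j| * a j ^ (1 / s)) ^ q := by
    intro j
    simp only [abs_apply_smul_rpow, tsum_mul_left]
    rw [Real.mul_rpow (by positivity) (ha j), Real.mul_rpow (abs_nonneg _) (by positivity),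
      ← Real.rpow_mul (abs_nonneg _), ← Real.rpow_mul (ha j)]
    congr 2 <;> field_simp
  have hhold_sum : Summable fun j => (a j ^ (1 / s)) ^ s := by simpa only [hroot] using hsum
  refine ⟨fun j => by simpa only [abs_apply_smul_rpow] using (hrow j).mul_left _, ?_, ?_⟩
  · simpa only [hterm] using Real.summable_Lr_of_Lp_Lq_of_nonneg htriple (fun j => abs_nonneg _)
      (fun j => by positivity) hlam hhold_sum
  calc (∑' j, (∑' k, |xs k (lam j • x j)| ^ s) ^ (q / s)) ^ (1 / q)
      = (∑' j, (|lam j| * a j ^ (1 / s)) ^ q) ^ (1 / q) := by simp only [hterm]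
    _ ≤ (∑' j, |lam j| ^ t) ^ (1 / t) * (∑' j, (a j ^ (1 / s)) ^ s) ^ (1 / s) :=
        Real.Lr_le_Lp_mul_Lq_tsum_of_nonneg htriple (fun j => abs_nonneg _)
          (fun j => by positivity) hlam hhold_sum
    _ ≤ (∑' j, |lam j| ^ t) ^ (1 / t) * (lrNorm r xs * weakNorm s x) := by
        simp only [hroot]
        gcongr
        rw [one_div, Real.rpow_inv_le_iff_of_pos (tsum_nonneg ha)
          (mul_nonneg lrNorm_nonneg weakNorm_nonneg) hs0]
        exact hbound

end Anisotropic

theorem stmt9_general {X : Type*} [NormedAddCommGroup X] [NormedSpace ℝ X]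
    {s q r t : ℝ} (hq : 1 ≤ q) (hqs : q < s) (hr : 1 ≤ r) (hrs : r ≤ s)
    (ht : 1 / q = 1 / s + 1 / t)
    (x : ℕ → X) (hx : WeaklySummable s x)
    (lam : ℕ → ℝ) (hlam : Summable fun j => |lam j| ^ t) :
    AnisoSummable s q r (fun j => lam j • x j) ∧
      anisoNorm s q r (fun j => lam j • x j) ≤
        (∑' j, |lam j| ^ t) ^ (1 / t) * weakNorm s x := by
  have hs0 : 0 < s := by linarith
  have hr0 : 0 < r := by linarith
  have ht0 : 0 < t := one_div_pos.1 <| by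
    linarith [one_div_lt_one_div_of_lt (zero_lt_one.trans_le hq) hqs]
  have htriple : t.HolderTriple s q := ⟨by simp only [one_div] at ht; linarith, ht0, hs0⟩
  have hbound := fun xs (hxs : MemLr r xs) =>
    hx.smul_anisotropic_bound (hq.trans hqs.le) hr0 hrs htriple hlam hxs
  refine ⟨fun xs hxs => ⟨(hbound xs hxs).1, (hbound xs hxs).2.1⟩, ?_⟩
  have : Nonempty {xs : ℕ → X →L[ℝ] ℝ // MemLr r xs ∧ lrNorm r xs ≤ 1} :=
    ⟨⟨0, by simp [MemLr, hr0.ne'], by simp [lrNorm, hr0.ne']⟩⟩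
  refine ciSup_le fun xs => (hbound xs.1 xs.2.1).2.2.trans ?_
  exact mul_le_mul_of_nonneg_left (mul_le_of_le_one_left weakNorm_nonneg xs.2.2)
    (Real.rpow_nonneg (tsum_nonneg fun _ => by positivity) _)

theorem stmt9 {X : Type*} [NormedAddCommGroup X] [NormedSpace ℝ X] [CompleteSpace X]
    {s q r t : ℝ} (hq : 1 ≤ q) (hqs : q < s) (hr : 1 ≤ r) (hrs : r ≤ s)
    (ht : 1 / q = 1 / s + 1 / t)
    (x : ℕ → X) (hx : WeaklySummable s x)
    (lam : ℕ → ℝ) (hlam : Summable fun j => |lam j| ^ t) :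
    AnisoSummable s q r (fun j => lam j • x j) ∧
      anisoNorm s q r (fun j => lam j • x j) ≤
        (∑' j, |lam j| ^ t) ^ (1 / t) * weakNorm s x :=
  stmt9_general hq hqs hr hrs ht x hx lam hlam
end
end

section
/- Let $1 \le q < s$, $1 \le r \le s$, $U, X$ Banach spaces and $u \in \mathcal{L}(U;X)$. If $(x_j)$ is anisotropic $(s,q,r)$-summable in $U$, then $(u(x_j))$ is anisotropic $(s,q,r)$-summable in $X$, and the induced operator $\widehat{u}: \ell^A_{(s,q,r)}(U) \to \ell^A_{(s,q,r)}(X)$ satisfies $\|\widehat{u}\| = \|u\|$. -/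
open scoped BigOperators NNReal ENNReal

noncomputable section

/-! The closed graph theorem turns an anisotropically summable `x` into a bounded operator
`f ↦ (f k (x j))_{j,k}` from `ℓ_r(X*)` to `ℓ_q(ℓ_s)`, whose operator norm is `anisoNorm s q r x`;
in particular the supremum defining `anisoNorm` is finite, not a junk value. For `u ∘ x` this
operator is the one of `x` precomposed with `(f_k) ↦ (f_k ∘ u)`, of norm at most `‖u‖`.
Conversely `(a, 0, 0, …)` has anisotropic norm `‖a‖`: the unit ball of `ℓ_r` lies in that of
`ℓ_s`, and a norming functional of `a` attains the bound. -/

open Filter Topology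

section

variable {X U : Type*} [NormedAddCommGroup X] [NormedSpace ℝ X]
  [NormedAddCommGroup U] [NormedSpace ℝ U]

def anisoTerm (s q : ℝ) (xs : ℕ → X →L[ℝ] ℝ) (x : ℕ → X) : ℝ :=
  (∑' j, (∑' k, |xs k (x j)| ^ s) ^ (q / s)) ^ (1 / q)

lemma anisoTerm_nonneg (s q : ℝ) (xs : ℕ → X →L[ℝ] ℝ) (x : ℕ → X) :
    0 ≤ anisoTerm s q xs x := by
  unfold anisoTerm; positivity

lemma anisoNorm_nonneg (s q r : ℝ) (x : ℕ → X) : 0 ≤ anisoNorm s q r x :=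
  Real.iSup_nonneg fun _ => anisoTerm_nonneg _ _ _ _

lemma tsum_norm_rpow_le_one_of_lrNorm_le_one {r : ℝ} {xs : ℕ → X →L[ℝ] ℝ} (hr : 0 < r)
    (h : lrNorm r xs ≤ 1) : ∑' k, ‖xs k‖ ^ r ≤ 1 := by
  have h0 : 0 ≤ ∑' k, ‖xs k‖ ^ r := by positivity
  have := Real.rpow_le_rpow (Real.rpow_nonneg h0 _) h hr.le
  rwa [← Real.rpow_mul h0, one_div_mul_cancel hr.ne', Real.rpow_one, Real.one_rpow] at this

lemma abs_apply_rpow_le {s : ℝ} (hs : 0 ≤ s) (g : X →L[ℝ] ℝ) (a : X) :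
    |g a| ^ s ≤ ‖g‖ ^ s * ‖a‖ ^ s := by
  rw [← Real.mul_rpow (norm_nonneg _) (norm_nonneg _), ← Real.norm_eq_abs]
  exact Real.rpow_le_rpow (norm_nonneg _) (g.le_opNorm a) hs

namespace MemLr

variable {r s : ℝ} {xs : ℕ → X →L[ℝ] ℝ}

lemma comp (hr : 0 ≤ r) (hxs : MemLr r xs) (u : U →L[ℝ] X) :
    MemLr r fun k => (xs k).comp u := by
  refine .of_nonneg_of_le (fun k => by positivity) (fun k => ?_) (hxs.mul_right (‖u‖ ^ r))
  rw [← Real.mul_rpow (norm_nonneg _) (norm_nonneg _)]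
  exact Real.rpow_le_rpow (norm_nonneg _) ((xs k).opNorm_comp_le u) hr

lemma summable_norm_rpow (hr : 0 < r) (hrs : r ≤ s) (hxs : MemLr r xs) :
    Summable fun k => ‖xs k‖ ^ s := by
  have hmem : Memℓp xs (ENNReal.ofReal r) :=
    memℓp_gen (by rwa [ENNReal.toReal_ofReal hr.le])
  simpa [ENNReal.toReal_ofReal (hr.le.trans hrs)] using
    (memℓp_gen_iff (by rw [ENNReal.toReal_ofReal (hr.le.trans hrs)]; exact hr.trans_le hrs)).1
      (hmem.of_exponent_ge (ENNReal.ofReal_le_ofReal hrs))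

lemma summable_abs_apply_rpow (hr : 0 < r) (hrs : r ≤ s) (hxs : MemLr r xs) (a : X) :
    Summable fun k => |xs k a| ^ s :=
  .of_nonneg_of_le (fun k => by positivity) (fun k => abs_apply_rpow_le (hr.le.trans hrs) _ a)
    ((hxs.summable_norm_rpow hr hrs).mul_right (‖a‖ ^ s))

lemma norm_le_one (hr : 0 < r) (hxs : MemLr r xs) (h : lrNorm r xs ≤ 1) (k : ℕ) :
    ‖xs k‖ ≤ 1 := by
  have hk : ‖xs k‖ ^ r ≤ 1 :=
    (hxs.le_tsum k fun _ _ => by positivity).trans (tsum_norm_rpow_le_one_of_lrNorm_le_one hr h)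
  by_contra! hlt
  exact hk.not_gt (Real.one_lt_rpow hlt hr)

lemma tsum_norm_rpow_le_one_of_le (hr : 0 < r) (hrs : r ≤ s) (hxs : MemLr r xs)
    (h : lrNorm r xs ≤ 1) : ∑' k, ‖xs k‖ ^ s ≤ 1 := by
  refine le_trans (Summable.tsum_le_tsum (fun k => ?_) (hxs.summable_norm_rpow hr hrs) hxs)
    (tsum_norm_rpow_le_one_of_lrNorm_le_one hr h)
  exact Real.rpow_le_rpow_of_exponent_ge' (norm_nonneg _) (hxs.norm_le_one hr h k) hr.le hrs

end MemLr

lemma AnisoSummable.comp {s q r : ℝ} (hr : 0 ≤ r) {x : ℕ → U} (hx : AnisoSummable s q r x)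
    (u : U →L[ℝ] X) : AnisoSummable s q r fun j => u (x j) :=
  fun xs hxs => hx (fun k => (xs k).comp u) (hxs.comp hr u)

section Single

variable {s q r : ℝ}

lemma anisoSummable_single (hq : 0 < q) (hr : 0 < r) (hrs : r ≤ s) (a : X) :
    AnisoSummable s q r (Pi.single 0 a) := by
  have hs : 0 < s := hr.trans_le hrs
  intro xs hxs
  refine ⟨fun j => ?_, ?_⟩
  · rcases eq_or_ne j 0 with rfl | hj
    · simpa using hxs.summable_abs_apply_rpow hr hrs a
    · simp [hj, Real.zero_rpow hs.ne']
  · refine summable_of_ne_finset_zero (s := {0}) fun j hj => ?_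
    simp [Finset.notMem_singleton.1 hj, Real.zero_rpow hs.ne', Real.zero_rpow (div_pos hq hs).ne']

lemma anisoTerm_single (hq : 0 < q) (hs : 0 < s) (xs : ℕ → X →L[ℝ] ℝ) (a : X) :
    anisoTerm s q xs (Pi.single 0 a) = (∑' k, |xs k a| ^ s) ^ (1 / s) := by
  rw [anisoTerm, tsum_eq_single 0 fun j hj => by
      simp [hj, Real.zero_rpow hs.ne', Real.zero_rpow (div_pos hq hs).ne'],
    Pi.single_eq_same, ← Real.rpow_mul (by positivity)]
  congr 1
  field_simp

lemma anisoTerm_single_le (hq : 0 < q) (hr : 0 < r) (hrs : r ≤ s) {xs : ℕ → X →L[ℝ] ℝ}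
    (hxs : MemLr r xs) (h : lrNorm r xs ≤ 1) (a : X) :
    anisoTerm s q xs (Pi.single 0 a) ≤ ‖a‖ := by
  have hs : 0 < s := hr.trans_le hrs
  have hsum : ∑' k, |xs k a| ^ s ≤ ‖a‖ ^ s := calc
    ∑' k, |xs k a| ^ s ≤ ∑' k, ‖xs k‖ ^ s * ‖a‖ ^ s :=
      Summable.tsum_le_tsum (fun k => abs_apply_rpow_le hs.le _ a)
        (hxs.summable_abs_apply_rpow hr hrs a) ((hxs.summable_norm_rpow hr hrs).mul_right _)
    _ = (∑' k, ‖xs k‖ ^ s) * ‖a‖ ^ s := tsum_mul_right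
    _ ≤ ‖a‖ ^ s :=
      mul_le_of_le_one_left (by positivity) (hxs.tsum_norm_rpow_le_one_of_le hr hrs h)
  rw [anisoTerm_single hq hs]
  calc _ ≤ (‖a‖ ^ s) ^ (1 / s) := by gcongr
    _ = ‖a‖ := by rw [← Real.rpow_mul (norm_nonneg a), mul_one_div_cancel hs.ne', Real.rpow_one]

lemma anisoNorm_single (hq : 0 < q) (hr : 0 < r) (hrs : r ≤ s) (a : X) :
    anisoNorm s q r (Pi.single 0 a) = ‖a‖ := by
  have hs : 0 < s := hr.trans_le hrs
  have hle : ∀ xs : {xs : ℕ → X →L[ℝ] ℝ // MemLr r xs ∧ lrNorm r xs ≤ 1},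
      anisoTerm s q xs.1 (Pi.single 0 a) ≤ ‖a‖ :=
    fun xs => anisoTerm_single_le hq hr hrs xs.2.1 xs.2.2 a
  refine le_antisymm (Real.iSup_le hle (norm_nonneg a)) ?_
  obtain rfl | ha := eq_or_ne a 0
  · simpa using anisoNorm_nonneg s q r (Pi.single 0 (0 : X))
  obtain ⟨g, hg, hga⟩ := exists_dual_vector ℝ a (norm_ne_zero_iff.2 ha)
  have hmem : MemLr r (Pi.single 0 g) := summable_of_ne_finset_zero (s := {0}) fun k hk => by
    simp [Finset.notMem_singleton.1 hk, Real.zero_rpow hr.ne']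
  have hnorm : lrNorm r (Pi.single 0 g) ≤ 1 := by
    rw [lrNorm, tsum_eq_single 0 fun k hk => by simp [hk, Real.zero_rpow hr.ne']]
    simp [hg]
  calc ‖a‖ = anisoTerm s q (Pi.single 0 g) (Pi.single 0 a) := by
        rw [anisoTerm_single hq hs,
          tsum_eq_single 0 fun k hk => by simp [hk, Real.zero_rpow hs.ne']]
        simp [hga, ← Real.rpow_mul (norm_nonneg a), hs.ne']
    _ ≤ _ := le_ciSup (f := fun xs : {xs : ℕ → X →L[ℝ] ℝ // MemLr r xs ∧ lrNorm r xs ≤ 1} =>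
        anisoTerm s q xs.1 (Pi.single 0 a)) ⟨_, Set.forall_mem_range.2 hle⟩ ⟨_, hmem, hnorm⟩

end Single

def precompCLM (u : U →L[ℝ] X) : (X →L[ℝ] ℝ) →L[ℝ] U →L[ℝ] ℝ :=
  (ContinuousLinearMap.compL ℝ U X ℝ).flip u

lemma norm_precompCLM_le (u : U →L[ℝ] X) : ‖precompCLM u‖ ≤ ‖u‖ :=
  ContinuousLinearMap.opNorm_le_bound _ (norm_nonneg u) fun g => by
    simpa [precompCLM, mul_comm] using g.opNorm_comp_le u

lemma coe_pos_of_fact_one_le (p : ℝ≥0) [hp : Fact (1 ≤ (p : ℝ≥0∞))] : 0 < (p : ℝ) := by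
  have : (1 : ℝ≥0) ≤ p := by exact_mod_cast hp.out
  exact_mod_cast zero_lt_one.trans_le this

section Operator

variable {r q s : ℝ≥0}

lemma memLr_coe [Fact (1 ≤ (r : ℝ≥0∞))] (f : lp (fun _ : ℕ => X →L[ℝ] ℝ) r) : MemLr r ⇑f := by
  simpa [MemLr] using (lp.memℓp f).summable (by simpa using coe_pos_of_fact_one_le r)

lemma lrNorm_coe [Fact (1 ≤ (r : ℝ≥0∞))] (f : lp (fun _ : ℕ => X →L[ℝ] ℝ) r) :
    lrNorm r ⇑f = ‖f‖ := by
  simp [lrNorm, lp.norm_eq_tsum_rpow (by simpa using coe_pos_of_fact_one_le r) f]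

variable [Fact (1 ≤ (r : ℝ≥0∞))] {x : ℕ → X}

def anisoRow (hx : AnisoSummable s q r x) (f : lp (fun _ : ℕ => X →L[ℝ] ℝ) r) (j : ℕ) :
    lp (fun _ : ℕ => ℝ) s :=
  ⟨fun k => f k (x j), memℓp_gen (by simpa using (hx f (memLr_coe f)).1 j)⟩

variable [Fact (1 ≤ (s : ℝ≥0∞))]

lemma norm_anisoRow_rpow (hx : AnisoSummable s q r x) (f : lp (fun _ : ℕ => X →L[ℝ] ℝ) r)
    (j : ℕ) : ‖anisoRow hx f j‖ ^ (q : ℝ) = (∑' k, |f k (x j)| ^ (s : ℝ)) ^ ((q : ℝ) / s) := by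
  rw [lp.norm_eq_tsum_rpow (by simpa using coe_pos_of_fact_one_le s), ← Real.rpow_mul
    (by positivity), one_div_mul_eq_div]
  simp [anisoRow]

variable [Fact (1 ≤ (q : ℝ≥0∞))]

def anisoOpₗ (hx : AnisoSummable s q r x) :
    lp (fun _ : ℕ => X →L[ℝ] ℝ) r →ₗ[ℝ] lp (fun _ : ℕ => lp (fun _ : ℕ => ℝ) s) q where
  toFun f := ⟨anisoRow hx f,
    memℓp_gen (by simpa [norm_anisoRow_rpow] using (hx f (memLr_coe f)).2)⟩
  map_add' f g := by ext j k; rfl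
  map_smul' c f := by ext j k; rfl

def anisoOp (hx : AnisoSummable s q r x) :
    lp (fun _ : ℕ => X →L[ℝ] ℝ) r →L[ℝ] lp (fun _ : ℕ => lp (fun _ : ℕ => ℝ) s) q :=
  .ofSeqClosedGraph (g := anisoOpₗ hx) fun fs f y hf hy => by
    ext j k
    have hdom : Continuous fun g : lp (fun _ : ℕ => X →L[ℝ] ℝ) r => g k (x j) :=
      (continuous_eval_const (x j)).comp (lp.lipschitzWith_one_eval _ k).continuous
    have hcod : Continuous fun z : lp (fun _ : ℕ => lp (fun _ : ℕ => ℝ) s) q => z j k :=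
      (lp.lipschitzWith_one_eval _ k).continuous.comp (lp.lipschitzWith_one_eval _ j).continuous
    have hlim_dom : Tendsto (fun n => fs n k (x j)) atTop (𝓝 (f k (x j))) :=
      (hdom.tendsto f).comp hf
    have hlim_cod : Tendsto (fun n => fs n k (x j)) atTop (𝓝 (y j k)) :=
      (hcod.tendsto y).comp hy
    exact tendsto_nhds_unique hlim_cod hlim_dom

lemma norm_anisoOp_apply (hx : AnisoSummable s q r x) (f : lp (fun _ : ℕ => X →L[ℝ] ℝ) r) :
    ‖anisoOp hx f‖ = anisoTerm s q f x := by
  rw [lp.norm_eq_tsum_rpow (by simpa using coe_pos_of_fact_one_le q)]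
  simp only [ENNReal.coe_toReal]
  exact congrArg (· ^ (1 / (q : ℝ))) (tsum_congr (norm_anisoRow_rpow hx f))

lemma anisoNorm_eq_norm_anisoOp (hx : AnisoSummable s q r x) :
    anisoNorm s q r x = ‖anisoOp hx‖ := by
  have hterm : ∀ xs : {xs : ℕ → X →L[ℝ] ℝ // MemLr r xs ∧ lrNorm r xs ≤ 1},
      anisoTerm s q xs.1 x ≤ ‖anisoOp hx‖ := by
    rintro ⟨xs, hxs, h⟩
    let f : lp (fun _ : ℕ => X →L[ℝ] ℝ) r := ⟨xs, memℓp_gen (by simpa [MemLr] using hxs)⟩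
    have hf : ‖f‖ ≤ 1 := by rwa [← lrNorm_coe]
    simpa [norm_anisoOp_apply] using (anisoOp hx).le_opNorm_of_le hf
  refine le_antisymm (Real.iSup_le hterm (anisoOp hx).opNorm_nonneg) ?_
  refine ContinuousLinearMap.opNorm_le_of_unit_norm (anisoNorm_nonneg s q r x) fun f hf => ?_
  rw [norm_anisoOp_apply]
  exact le_ciSup (f := fun xs : {xs : ℕ → X →L[ℝ] ℝ // MemLr r xs ∧ lrNorm r xs ≤ 1} =>
    anisoTerm s q xs.1 x) ⟨_, Set.forall_mem_range.2 hterm⟩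
    ⟨⇑f, memLr_coe f, (lrNorm_coe f).trans_le hf.le⟩

lemma anisoOp_comp {x : ℕ → U} (hx : AnisoSummable s q r x) (u : U →L[ℝ] X) :
    anisoOp (hx.comp r.2 u) = (anisoOp hx).comp
      (lp.mapCLM r (fun _ => precompCLM u) (norm_nonneg u) fun _ => norm_precompCLM_le u) := by
  ext f j k
  rfl

lemma anisoNorm_comp_le {x : ℕ → U} (hx : AnisoSummable s q r x) (u : U →L[ℝ] X) :
    anisoNorm s q r (fun j => u (x j)) ≤ ‖u‖ * anisoNorm s q r x := by
  rw [anisoNorm_eq_norm_anisoOp (hx.comp r.2 u), anisoNorm_eq_norm_anisoOp hx, anisoOp_comp,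
    mul_comm]
  exact ((anisoOp hx).opNorm_comp_le _).trans
    (mul_le_mul_of_nonneg_left (lp.norm_mapCLM_le _ _ _ _) (norm_nonneg _))

end Operator

end

theorem stmt14_general {U X : Type*} [NormedAddCommGroup U] [NormedSpace ℝ U]
    [NormedAddCommGroup X] [NormedSpace ℝ X]
    {s q r : ℝ} (hq : 1 ≤ q) (hqs : q < s) (hr : 1 ≤ r) (hrs : r ≤ s)
    (u : U →L[ℝ] X) :
    (∀ x : ℕ → U, AnisoSummable s q r x → AnisoSummable s q r fun j => u (x j)) ∧
      (⨆ x : {x : ℕ → U // AnisoSummable s q r x ∧ anisoNorm s q r x ≤ 1},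
        anisoNorm s q r fun j => u (x.1 j)) = ‖u‖ := by
  lift s to ℝ≥0 using by linarith
  lift q to ℝ≥0 using by linarith
  lift r to ℝ≥0 using by linarith
  have : Fact (1 ≤ (r : ℝ≥0∞)) := ⟨by exact_mod_cast hr⟩
  have : Fact (1 ≤ (q : ℝ≥0∞)) := ⟨by exact_mod_cast hq⟩
  have : Fact (1 ≤ (s : ℝ≥0∞)) := ⟨by exact_mod_cast hq.trans hqs.le⟩
  have hq0 : 0 < (q : ℝ) := by linarith
  have hr0 : 0 < (r : ℝ) := by linarith
  have hbound : ∀ x : {x : ℕ → U // AnisoSummable s q r x ∧ anisoNorm s q r x ≤ 1},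
      anisoNorm s q r (fun j => u (x.1 j)) ≤ ‖u‖ := fun ⟨x, hx, hx1⟩ =>
    (anisoNorm_comp_le hx u).trans (mul_le_of_le_one_right (norm_nonneg u) hx1)
  refine ⟨fun x hx => hx.comp r.2 u, le_antisymm (Real.iSup_le hbound (norm_nonneg u)) ?_⟩
  refine ContinuousLinearMap.opNorm_le_of_unit_norm
    (Real.iSup_nonneg fun _ => anisoNorm_nonneg _ _ _ _) fun b hb => ?_
  have hsingle : (fun j => u ((Pi.single 0 b : ℕ → U) j)) = Pi.single 0 (u b) :=
    funext (Pi.apply_single (fun _ => u) (fun _ => map_zero u) 0 b)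
  calc ‖u b‖ = anisoNorm s q r (fun j => u ((Pi.single 0 b : ℕ → U) j)) := by
        rw [hsingle, anisoNorm_single hq0 hr0 hrs]
    _ ≤ _ := le_ciSup ⟨‖u‖, Set.forall_mem_range.2 hbound⟩
        ⟨Pi.single 0 b, anisoSummable_single hq0 hr0 hrs b,
          (anisoNorm_single hq0 hr0 hrs b).trans_le hb.le⟩

theorem stmt14 {U X : Type*} [NormedAddCommGroup U] [NormedSpace ℝ U] [CompleteSpace U]
    [NormedAddCommGroup X] [NormedSpace ℝ X] [CompleteSpace X]
    {s q r : ℝ} (hq : 1 ≤ q) (hqs : q < s) (hr : 1 ≤ r) (hrs : r ≤ s)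
    (u : U →L[ℝ] X) :
    (∀ x : ℕ → U, AnisoSummable s q r x → AnisoSummable s q r fun j => u (x j)) ∧
      (⨆ x : {x : ℕ → U // AnisoSummable s q r x ∧ anisoNorm s q r x ≤ 1},
        anisoNorm s q r fun j => u (x.1 j)) = ‖u‖ :=
  stmt14_general hq hqs hr hrs u
end
end

section
/- Let $1 \le p \le q < s$, $1 \le r \le s$, and let $v \in \mathcal{L}(X;Y)$ be a metric injection. If $v \circ T$ is weakly anisotropic $(s,q,r;p)$-summing for $T \in \mathcal{L}(U;X)$, then $T$ is weakly anisotropic $(s,q,r;p)$-summing, with $w^A_{(s,q,r;p)}(T) \le w^A_{(s,q,r;p)}(v\circ T)$ (injectivity of the ideal $\mathcal{W}^A_{(s,q,r;p)}$). -/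
/-!
By Hahn–Banach, every functional on `X` factors through the isometry `v` via a functional on `Y`
of no larger norm. Replacing each `x_k^*` by such an extension `y_k^*` leaves the left-hand side
unchanged (`y_k^*(v T u_j) = x_k^*(T u_j)`) and does not increase `‖(y_k^*)‖_r`, so every
constant admissible for `v ∘ T` is admissible for `T`.
-/

open scoped BigOperators NNReal ENNReal

noncomputable section

/-- `T` is weakly anisotropic `(s,q,r;p)`-summing, with witnessing constant `D`. -/
def WASConst (s q r p : ℝ) {U X : Type*} [NormedAddCommGroup U] [NormedSpace ℝ U]
    [NormedAddCommGroup X] [NormedSpace ℝ X] (T : U →L[ℝ] X) (D : ℝ) : Prop :=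
  0 < D ∧ ∀ (u : ℕ → U) (xs : ℕ → X →L[ℝ] ℝ), WeaklySummable p u → MemLr r xs →
    (∑' j, (∑' k, |xs k (T (u j))| ^ s) ^ (q / s)) ^ (1 / q) ≤
      D * (∑' k, ‖xs k‖ ^ r) ^ (1 / r) * weakNorm p u

/-- The weakly anisotropic `(s,q,r;p)`-summing norm: infimum of admissible constants. -/
noncomputable def wANorm (s q r p : ℝ) {U X : Type*} [NormedAddCommGroup U] [NormedSpace ℝ U]
    [NormedAddCommGroup X] [NormedSpace ℝ X] (T : U →L[ℝ] X) : ℝ :=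
  sInf {D : ℝ | WASConst s q r p T D}

theorem LinearIsometry.exists_dual_extension {𝕜 X Y : Type*} [RCLike 𝕜]
    [NormedAddCommGroup X] [NormedSpace 𝕜 X] [NormedAddCommGroup Y] [NormedSpace 𝕜 Y]
    (v : X →ₗᵢ[𝕜] Y) (φ : StrongDual 𝕜 X) :
    ∃ ψ : StrongDual 𝕜 Y, ψ.comp v.toContinuousLinearMap = φ ∧ ‖ψ‖ ≤ ‖φ‖ := by
  let w : v.range →L[𝕜] X := v.equivRange.symm.toLinearIsometry.toContinuousLinearMap
  obtain ⟨ψ, hψ, hψn⟩ := exists_extension_norm_eq _ (φ.comp w)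
  refine ⟨ψ, ContinuousLinearMap.ext fun x => by simpa [w] using hψ (v.equivRange x), ?_⟩
  calc ‖ψ‖ = ‖φ.comp w‖ := hψn
    _ ≤ ‖φ‖ * ‖w‖ := φ.opNorm_comp_le w
    _ ≤ ‖φ‖ :=
      mul_le_of_le_one_right (norm_nonneg φ) (LinearIsometry.norm_toContinuousLinearMap_le _)

theorem weakNorm_nonneg_s19 (p : ℝ) {X : Type*} [NormedAddCommGroup X] [NormedSpace ℝ X]
    (x : ℕ → X) : 0 ≤ weakNorm p x :=
  Real.iSup_nonneg fun _ =>
    Real.rpow_nonneg (tsum_nonneg fun _ => Real.rpow_nonneg (abs_nonneg _) _) _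

theorem MemLr.of_norm_le {r : ℝ} (hr : 0 ≤ r) {X Y : Type*} [NormedAddCommGroup X]
    [NormedSpace ℝ X] [NormedAddCommGroup Y] [NormedSpace ℝ Y] {xs : ℕ → X →L[ℝ] ℝ}
    {ys : ℕ → Y →L[ℝ] ℝ} (hxs : MemLr r xs) (hle : ∀ k, ‖ys k‖ ≤ ‖xs k‖) :
    MemLr r ys ∧ lrNorm r ys ≤ lrNorm r xs := by
  have hle' : ∀ k, ‖ys k‖ ^ r ≤ ‖xs k‖ ^ r := fun k =>
    Real.rpow_le_rpow (norm_nonneg _) (hle k) hr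
  have hys : MemLr r ys :=
    hxs.of_nonneg_of_le (fun _ => Real.rpow_nonneg (norm_nonneg _) r) hle'
  exact ⟨hys, Real.rpow_le_rpow (tsum_nonneg fun _ => Real.rpow_nonneg (norm_nonneg _) _)
    (hys.tsum_le_tsum hle' hxs) (by positivity)⟩

theorem WASConst.of_comp_linearIsometry {s q r p D : ℝ} (hr : 0 ≤ r)
    {U X Y : Type*} [NormedAddCommGroup U] [NormedSpace ℝ U]
    [NormedAddCommGroup X] [NormedSpace ℝ X] [NormedAddCommGroup Y] [NormedSpace ℝ Y]
    (v : X →ₗᵢ[ℝ] Y) {T : U →L[ℝ] X}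
    (h : WASConst s q r p (v.toContinuousLinearMap.comp T) D) :
    WASConst s q r p T D := by
  obtain ⟨hD, hvT⟩ := h
  refine ⟨hD, fun u xs hu hxs => ?_⟩
  choose ys hys hnorm using fun k => v.exists_dual_extension (xs k)
  obtain ⟨hysr, hlr⟩ := hxs.of_norm_le hr hnorm
  have hcomp : ∀ j k, ys k (v (T (u j))) = xs k (T (u j)) := fun j k =>
    congrArg (fun f : X →L[ℝ] ℝ => f (T (u j))) (hys k)
  calc (∑' j, (∑' k, |xs k (T (u j))| ^ s) ^ (q / s)) ^ (1 / q)
      = (∑' j, (∑' k, |ys k (v (T (u j)))| ^ s) ^ (q / s)) ^ (1 / q) := by simp only [hcomp]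
    _ ≤ D * lrNorm r ys * weakNorm p u := hvT u ys hu hysr
    _ ≤ D * lrNorm r xs * weakNorm p u := by gcongr; exact weakNorm_nonneg_s19 p u

theorem stmt19_general {U X Y : Type*} [NormedAddCommGroup U] [NormedSpace ℝ U]
    [NormedAddCommGroup X] [NormedSpace ℝ X]
    [NormedAddCommGroup Y] [NormedSpace ℝ Y]
    {s q r p : ℝ} (hr : 1 ≤ r)
    (v : X →L[ℝ] Y) (hv : ∀ x : X, ‖v x‖ = ‖x‖) (T : U →L[ℝ] X)
    (h : ∃ D : ℝ, WASConst s q r p (v.comp T) D) :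
    (∃ D : ℝ, WASConst s q r p T D) ∧
      wANorm s q r p T ≤ wANorm s q r p (v.comp T) := by
  have key : ∀ D, WASConst s q r p (v.comp T) D → WASConst s q r p T D :=
    fun _ => WASConst.of_comp_linearIsometry (by linarith) ⟨v.toLinearMap, hv⟩
  obtain ⟨D, hD⟩ := h
  exact ⟨⟨D, key D hD⟩, csInf_le_csInf ⟨0, fun _ hd => hd.1.le⟩ ⟨D, hD⟩ key⟩

theorem stmt19 {U X Y : Type*} [NormedAddCommGroup U] [NormedSpace ℝ U] [CompleteSpace U]
    [NormedAddCommGroup X] [NormedSpace ℝ X] [CompleteSpace X]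
    [NormedAddCommGroup Y] [NormedSpace ℝ Y] [CompleteSpace Y]
    {s q r p : ℝ} (hp : 1 ≤ p) (hpq : p ≤ q) (hqs : q < s) (hr : 1 ≤ r) (hrs : r ≤ s)
    (v : X →L[ℝ] Y) (hv : ∀ x : X, ‖v x‖ = ‖x‖) (T : U →L[ℝ] X)
    (h : ∃ D : ℝ, WASConst s q r p (v.comp T) D) :
    (∃ D : ℝ, WASConst s q r p T D) ∧
      wANorm s q r p T ≤ wANorm s q r p (v.comp T) :=
  stmt19_general hr v hv T h
end
end
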